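/- arXiv:1812.09104 — 2 statements merged into one kernel-verified Lean document; each statement's English description precedes it below -/
import Mathlib

section
/- Let X, Y, Z be independent with X ~ Exp(λ_X), Y ~ Exp(λ_Y), Z ~ Exp(1/Ω), and constants ρ, τ, ξ > 0 with τ < ξ. Then P( τ(ρZ+1) < X, X < ξ(ρZ+1), Y > θ ) = e^{−λ_Y θ}·( e^{−λ_X τ}/(1+λ_X ρτΩ) − e^{−λ_X ξ}/(1+λ_X ρξΩ) ), where θ = max(τ, ξ) = ξ. -/
open MeasureTheory ProbabilityTheory Real

/-!
Given `Z = z`, the condition on `X` is that it lies in the interval `(τ(ρz+1), ξ(ρz+1))`, of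
`Exp(λ_X)`-probability `e^{-λ_X τ(ρz+1)} - e^{-λ_X ξ(ρz+1)}`. Averaging over `Z ~ Exp(1/Ω)` is a
Laplace transform, `E e^{-sZ} = 1/(1 + sΩ)`, computed by absorbing `e^{-sz}` into the exponential
density. Since `Y` is independent of `(X, Z)`, it contributes the factor `P(Y > θ) = e^{-λ_Y θ}`.
-/

open Set
open scoped ENNReal

namespace ProbabilityTheory

instance nullSingletonClass_expMeasure (r : ℝ) : NullSingletonClass (expMeasure r) := by
  unfold expMeasure gammaMeasure; infer_instance

variable {r : ℝ}

lemma expMeasure_Iic_zero : expMeasure r (Iic 0) = 0 := by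
  rw [← measure_congr Iio_ae_eq_Iic, expMeasure, gammaMeasure, withDensity_apply _ measurableSet_Iio]
  exact lintegral_exponentialPDF_of_nonpos le_rfl

lemma ae_pos_expMeasure : ∀ᵐ z ∂expMeasure r, 0 < z := by
  simpa [ae_iff, Iic] using expMeasure_Iic_zero (r := r)

lemma expMeasure_Ioi (hr : 0 < r) {t : ℝ} (ht : 0 ≤ t) :
    expMeasure r (Ioi t) = ENNReal.ofReal (exp (-(r * t))) := by
  have := isProbabilityMeasure_expMeasure hr
  have hexp : exp (-(r * t)) ≤ 1 := exp_le_one_iff.2 (by nlinarith)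
  rw [← compl_Iic, prob_compl_eq_one_sub measurableSet_Iic, ← ofReal_cdf, cdf_expMeasure_eq hr,
    if_pos ht, ← ENNReal.ofReal_one, ← ENNReal.ofReal_sub _ (by linarith), sub_sub_cancel]

lemma expMeasure_Ioo (hr : 0 < r) {a b : ℝ} (ha : 0 ≤ a) (hb : 0 ≤ b) :
    expMeasure r (Ioo a b) = ENNReal.ofReal (exp (-(r * a)) - exp (-(r * b))) := by
  have := isProbabilityMeasure_expMeasure hr
  rw [measure_congr Ioo_ae_eq_Ioc, ← measure_cdf (expMeasure r), StieltjesFunction.measure_Ioc,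
    cdf_expMeasure_eq hr, cdf_expMeasure_eq hr, if_pos ha, if_pos hb, sub_sub_sub_cancel_left]

lemma exponentialPDF_mul_exp_neg_mul {a : ℝ} (hr : 0 ≤ r) (hra : 0 < r + a) (z : ℝ) :
    exponentialPDF r z * ENNReal.ofReal (exp (-(a * z)))
      = ENNReal.ofReal (r / (r + a)) * exponentialPDF (r + a) z := by
  rcases lt_or_ge z 0 with hz | hz
  · simp [exponentialPDF_of_neg hz]
  rw [exponentialPDF_of_nonneg hz, exponentialPDF_of_nonneg hz,
    ← ENNReal.ofReal_mul (by positivity), ← ENNReal.ofReal_mul (by positivity)]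
  congr 1
  rw [show -((r + a) * z) = -(r * z) + -(a * z) by ring, exp_add]
  field_simp

lemma lintegral_exp_neg_mul_expMeasure {a : ℝ} (hr : 0 ≤ r) (hra : 0 < r + a) :
    ∫⁻ z, ENNReal.ofReal (exp (-(a * z))) ∂expMeasure r = ENNReal.ofReal (r / (r + a)) := by
  rw [expMeasure, gammaMeasure, lintegral_withDensity_eq_lintegral_mul _
      (show Measurable (gammaPDF 1 r) from (measurable_gammaPDFReal 1 r).ennreal_ofReal)
      (by fun_prop)]
  simp only [Pi.mul_apply]
  simp_rw [show gammaPDF 1 r = exponentialPDF r from rfl, exponentialPDF_mul_exp_neg_mul hr hra]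
  have hmeas : Measurable (exponentialPDF (r + a)) :=
    (measurable_exponentialPDFReal _).ennreal_ofReal
  rw [lintegral_const_mul _ hmeas,
    lintegral_exponentialPDF_eq_one hra, mul_one]

lemma lintegral_exp_neg_affine_expMeasure {c ρ : ℝ} (hr : 0 ≤ r) (hrc : 0 < r + c * ρ) :
    ∫⁻ z, ENNReal.ofReal (exp (-(c * (ρ * z + 1)))) ∂expMeasure r
      = ENNReal.ofReal (exp (-c) * (r / (r + c * ρ))) := by
  have hsplit : ∀ z, ENNReal.ofReal (exp (-(c * (ρ * z + 1))))
      = ENNReal.ofReal (exp (-c)) * ENNReal.ofReal (exp (-(c * ρ * z))) := fun z => by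
    rw [← ENNReal.ofReal_mul (exp_pos _).le, ← exp_add]
    ring_nf
  simp_rw [hsplit]
  rw [lintegral_const_mul _ (by fun_prop), lintegral_exp_neg_mul_expMeasure hr hrc,
    ENNReal.ofReal_mul (exp_pos _).le]

lemma measurableSet_affine_sandwich (a b ρ : ℝ) :
    MeasurableSet {p : ℝ × ℝ | a * (ρ * p.2 + 1) < p.1 ∧ p.1 < b * (ρ * p.2 + 1)} :=
  (measurableSet_lt (by fun_prop) measurable_fst).inter
    (measurableSet_lt measurable_fst (by fun_prop))

lemma prod_expMeasure_affine_sandwich {l ρ a b : ℝ} (hl : 0 < l) (hr : 0 < r) (hρ : 0 ≤ ρ)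
    (ha : 0 ≤ a) (hab : a ≤ b) :
    ((expMeasure l).prod (expMeasure r)) {p | a * (ρ * p.2 + 1) < p.1 ∧ p.1 < b * (ρ * p.2 + 1)}
      = ENNReal.ofReal (exp (-(l * a)) * (r / (r + l * a * ρ))
          - exp (-(l * b)) * (r / (r + l * b * ρ))) := by
  have := isProbabilityMeasure_expMeasure hl
  have := isProbabilityMeasure_expMeasure hr
  have hb : 0 ≤ b := ha.trans hab
  set F : ℝ → ℝ → ℝ≥0∞ := fun c z => ENNReal.ofReal (exp (-(l * c * (ρ * z + 1))))
  have hslice : ∀ᵐ z ∂expMeasure r,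
      expMeasure l {x | a * (ρ * z + 1) < x ∧ x < b * (ρ * z + 1)} = F a z - F b z := by
    filter_upwards [ae_pos_expMeasure] with z hz
    have hz1 : 0 < ρ * z + 1 := by positivity
    rw [show {x | a * (ρ * z + 1) < x ∧ x < b * (ρ * z + 1)} = Ioo _ _ from rfl,
      expMeasure_Ioo hl (by positivity) (by nlinarith), ENNReal.ofReal_sub _ (exp_pos _).le]
    simp only [F, mul_assoc]
  have hFb_le : F b ≤ᵐ[expMeasure r] F a := by
    filter_upwards [ae_pos_expMeasure] with z hz
    have hz1 : 0 < ρ * z + 1 := by positivity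
    exact ENNReal.ofReal_le_ofReal
      (exp_le_exp.2 (by nlinarith [mul_le_mul_of_nonneg_left hab hl.le]))
  have hF : ∀ c, 0 ≤ c → ∫⁻ z, F c z ∂expMeasure r
      = ENNReal.ofReal (exp (-(l * c)) * (r / (r + l * c * ρ))) := fun c hc =>
    lintegral_exp_neg_affine_expMeasure hr.le (by positivity)
  rw [Measure.prod_apply_symm (measurableSet_affine_sandwich a b ρ)]
  refine (lintegral_congr_ae hslice).trans ?_
  rw [lintegral_sub (by fun_prop) (by rw [hF b hb]; exact ENNReal.ofReal_ne_top) hFb_le,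
    hF a ha, hF b hb, ← ENNReal.ofReal_sub _ (by positivity)]

lemma measure_preimage_prodMk_inter_of_iIndepFun {Ω β : Type*} [MeasurableSpace Ω]
    [MeasurableSpace β] {μ : Measure Ω} [IsProbabilityMeasure μ] {X Y Z : Ω → β}
    (hXm : Measurable X) (hYm : Measurable Y) (hZm : Measurable Z)
    (hindep : iIndepFun ![X, Y, Z] μ) {S : Set (β × β)} {T : Set β}
    (hS : MeasurableSet S) (hT : MeasurableSet T) :
    μ ((fun ω => (X ω, Z ω)) ⁻¹' S ∩ Y ⁻¹' T) = (μ.map X).prod (μ.map Z) S * μ.map Y T := by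
  have hm : ∀ i, Measurable (![X, Y, Z] i) := fun i => by fin_cases i <;> assumption
  have hXZ_Y : IndepFun (fun ω => (X ω, Z ω)) Y μ := by
    simpa using hindep.indepFun_prodMk hm 0 2 1 (by decide) (by decide)
  have hX_Z : IndepFun X Z μ := by simpa using hindep.indepFun (i := 0) (j := 2) (by decide)
  rw [hXZ_Y.measure_inter_preimage_eq_mul S T hS hT, Measure.map_apply hYm hT,
    ← (indepFun_iff_map_prod_eq_prod_map_map hXm.aemeasurable hZm.aemeasurable).mp hX_Z,
    Measure.map_apply (hXm.prodMk hZm) hS]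

end ProbabilityTheory

/-- The term J₂₂ of Appendix B in exact form: for independent X ~ Exp(lamX),
Y ~ Exp(lamY), Z ~ Exp(1/Om), and 0 < τ < ξ with θ = max(τ, ξ),
P( τ(ρZ+1) < X, X < ξ(ρZ+1), Y > θ )
  = e^{−lamY·θ}·( e^{−lamX·τ}/(1+lamX·ρτ·Om) − e^{−lamX·ξ}/(1+lamX·ρξ·Om) ). -/
theorem stmt15 {Ω : Type*} [MeasurableSpace Ω] (Pr : Measure Ω) [IsProbabilityMeasure Pr]
    (X Y Z : Ω → ℝ) (hXm : Measurable X) (hYm : Measurable Y) (hZm : Measurable Z)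
    (lamX lamY Om ρ τ ξ : ℝ) (hlamX : 0 < lamX) (hlamY : 0 < lamY) (hOm : 0 < Om) (hρ : 0 < ρ)
    (hτ : 0 < τ) (hτξ : τ < ξ)
    (hX : Measure.map X Pr = expMeasure lamX)
    (hY : Measure.map Y Pr = expMeasure lamY)
    (hZ : Measure.map Z Pr = expMeasure (1 / Om))
    (hindep : iIndepFun ![X, Y, Z] Pr) :
    Pr {ω | τ * (ρ * Z ω + 1) < X ω ∧ X ω < ξ * (ρ * Z ω + 1) ∧ Y ω > max τ ξ}
      = ENNReal.ofReal
          (Real.exp (-lamY * max τ ξ) *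
            (Real.exp (-lamX * τ) / (1 + lamX * ρ * τ * Om)
              - Real.exp (-lamX * ξ) / (1 + lamX * ρ * ξ * Om))) := by
  have hevent : {ω | τ * (ρ * Z ω + 1) < X ω ∧ X ω < ξ * (ρ * Z ω + 1) ∧ Y ω > max τ ξ}
      = (fun ω => (X ω, Z ω)) ⁻¹' {p | τ * (ρ * p.2 + 1) < p.1 ∧ p.1 < ξ * (ρ * p.2 + 1)}
        ∩ Y ⁻¹' Ioi (max τ ξ) := by
    ext ω; simp [and_assoc]
  rw [hevent, measure_preimage_prodMk_inter_of_iIndepFun hXm hYm hZm hindep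
      (measurableSet_affine_sandwich τ ξ ρ) measurableSet_Ioi,
    hX, hY, hZ, prod_expMeasure_affine_sandwich hlamX (by positivity) hρ.le hτ.le hτξ.le,
    expMeasure_Ioi hlamY (hτ.le.trans (le_max_left τ ξ)), mul_comm,
    ← ENNReal.ofReal_mul (exp_pos _).le]
  congr 2
  · rw [neg_mul]
  · field_simp
end

section
/- Let X ~ Exp(λ) and Z ~ Exp(1/Ω) be independent, with λ, Ω, c > 0, and let τ = τ(ρ) = c/ρ for ρ > 0. Then lim_{ρ→∞} P( X < τ(ρ)(ρZ+1) ) = lim_{ρ→∞} [1 − e^{−λc/ρ}/(1+λcΩ)] = 1 − 1/(1+λcΩ) = λcΩ/(1+λcΩ) > 0. -/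
open MeasureTheory ProbabilityTheory Real Filter Topology Set

lemma exp_integral_Ioi (k : ℝ) (hk : 0 < k) :
    ∫ z in Ioi (0:ℝ), exp (-(k * z)) = k⁻¹ := by
  have := MeasureTheory.integral_comp_mul_left_Ioi (fun x => exp (-x)) 0 hk
  simp only [mul_zero, smul_eq_mul] at this
  rw [this, integral_exp_neg_Ioi_zero, mul_one]

lemma expMeasure_Iio {r t : ℝ} (hr : 0 < r) (ht : 0 ≤ t) :
    expMeasure r (Iio t) = ENNReal.ofReal (1 - exp (-(r * t))) := by
  have h1 : expMeasure r (Iic t) = ENNReal.ofReal (1 - exp (-(r * t))) := by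
    rw [expMeasure, gammaMeasure, withDensity_apply _ measurableSet_Iic]
    have := lintegral_exponentialPDF_eq_antiDeriv hr t
    rw [if_pos ht] at this
    exact this
  have h2 : expMeasure r {t} = 0 := by
    rw [expMeasure, gammaMeasure, withDensity_apply _ (measurableSet_singleton t)]
    rw [setLIntegral_measure_zero _ _ (Real.volume_singleton)]
  rw [← h1, ← Iic_diff_right, measure_diff_null h2]

lemma key_prod (lam r a b : ℝ) (hlam : 0 < lam) (hr : 0 < r) (ha : 0 < a) (hb : 0 < b) :
    ((expMeasure r).prod (expMeasure lam)) {p : ℝ × ℝ | p.2 < a * p.1 + b}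
      = ENNReal.ofReal (1 - exp (-(lam * b)) * (r / (r + lam * a))) := by
  have hS : MeasurableSet {p : ℝ × ℝ | p.2 < a * p.1 + b} :=
    measurableSet_lt measurable_snd ((measurable_fst.const_mul a).add_const b)
  have : IsProbabilityMeasure (expMeasure lam) := isProbabilityMeasure_expMeasure hlam
  rw [Measure.prod_apply hS]
  have hslice : ∀ z : ℝ, (Prod.mk z ⁻¹' {p : ℝ × ℝ | p.2 < a * p.1 + b}) = Iio (a * z + b) := by
    intro z; ext x; simp [Set.mem_Iio]
  simp only [hslice]
  have hpdfm : Measurable (exponentialPDF r) :=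
    (measurable_exponentialPDFReal r).ennreal_ofReal
  have hgm : Measurable (fun z : ℝ => expMeasure lam (Iio (a * z + b))) := by
    have hmono : Monotone (fun t : ℝ => expMeasure lam (Iio t)) :=
      fun s t hst => measure_mono (Iio_subset_Iio hst)
    exact hmono.measurable.comp ((measurable_id.const_mul a).add_const b)
  rw [show expMeasure r = volume.withDensity (exponentialPDF r) from rfl,
    lintegral_withDensity_eq_lintegral_mul _ hpdfm hgm]
  simp only [Pi.mul_apply]
  rw [← lintegral_add_compl (μ := volume)
    (fun z => exponentialPDF r z * expMeasure lam (Iio (a * z + b)))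
    (measurableSet_Ici (a := (0:ℝ)))]
  have hzero : ∫⁻ z in (Ici (0:ℝ))ᶜ, exponentialPDF r z * expMeasure lam (Iio (a * z + b)) = 0 := by
    rw [compl_Ici]
    rw [setLIntegral_congr_fun measurableSet_Iio (fun z (hz : z < 0) => by
      beta_reduce; rw [exponentialPDF_of_neg hz, zero_mul])]
    simp
  rw [hzero, add_zero]
  -- rewrite integrand on Ici 0
  have hcong : ∫⁻ z in Ici (0:ℝ), exponentialPDF r z * expMeasure lam (Iio (a * z + b))
      = ∫⁻ z in Ici (0:ℝ),
          ENNReal.ofReal (r * exp (-(r * z)) * (1 - exp (-(lam * (a * z + b))))) := by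
    refine setLIntegral_congr_fun measurableSet_Ici (fun z (hz : (0:ℝ) ≤ z) => ?_)
    beta_reduce
    have hazb : 0 ≤ a * z + b := by positivity
    rw [exponentialPDF_of_nonneg hz, expMeasure_Iio hlam hazb,
      ← ENNReal.ofReal_mul (by positivity)]
  rw [hcong]
  have hIoi : ∫⁻ z in Ici (0:ℝ),
      ENNReal.ofReal (r * exp (-(r * z)) * (1 - exp (-(lam * (a * z + b)))))
      = ∫⁻ z in Ioi (0:ℝ),
      ENNReal.ofReal (r * exp (-(r * z)) * (1 - exp (-(lam * (a * z + b)))))  := by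
    rw [← MeasureTheory.restrict_Ioi_eq_restrict_Ici]
  rw [hIoi]
  -- integrability facts
  have hint1 : IntegrableOn (fun z : ℝ => r * exp (-(r * z))) (Ioi 0) := by
    have := exp_neg_integrableOn_Ioi 0 hr
    have h := this.const_mul r
    simp only [neg_mul] at h
    exact h
  have hras : 0 < r + lam * a := by positivity
  have hint2 : IntegrableOn (fun z : ℝ => (r * exp (-(lam * b))) * exp (-((r + lam * a) * z)))
      (Ioi 0) := by
    have h0 : IntegrableOn (fun z : ℝ => exp (-((r + lam * a) * z))) (Ioi 0) := by
      exact (exp_neg_integrableOn_Ioi 0 hras).congr_fun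
        (fun z _ => by beta_reduce; rw [neg_mul]) measurableSet_Ioi
    exact h0.const_mul _
  have heq : ∀ z : ℝ, r * exp (-(r * z)) * (1 - exp (-(lam * (a * z + b))))
      = r * exp (-(r * z)) - (r * exp (-(lam * b))) * exp (-((r + lam * a) * z)) := by
    intro z
    rw [mul_sub, mul_one]
    congr 1
    rw [mul_assoc, ← exp_add, mul_assoc, ← exp_add]
    congr 2
    ring
  have hintall : IntegrableOn
      (fun z : ℝ => r * exp (-(r * z)) * (1 - exp (-(lam * (a * z + b))))) (Ioi 0) := by
    have hsub : IntegrableOn (fun z : ℝ => r * exp (-(r * z))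
        - (r * exp (-(lam * b))) * exp (-((r + lam * a) * z))) (Ioi 0) := hint1.sub hint2
    exact hsub.congr_fun (fun z _ => (heq z).symm) measurableSet_Ioi
  have hnonneg : 0 ≤ᵐ[volume.restrict (Ioi (0:ℝ))]
      (fun z : ℝ => r * exp (-(r * z)) * (1 - exp (-(lam * (a * z + b))))) := by
    refine ae_restrict_of_forall_mem measurableSet_Ioi (fun z hz => ?_)
    have hz0 : (0:ℝ) < z := hz
    have harg : -(lam * (a * z + b)) ≤ 0 := neg_nonpos.mpr (by positivity)
    have : exp (-(lam * (a * z + b))) ≤ 1 := exp_le_one_iff.mpr harg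
    have h1 : 0 ≤ 1 - exp (-(lam * (a * z + b))) := by linarith
    positivity
  rw [← MeasureTheory.ofReal_integral_eq_lintegral_ofReal hintall hnonneg]
  congr 1
  rw [integral_congr_ae (ae_restrict_of_forall_mem measurableSet_Ioi (fun z _ => heq z)),
    integral_sub hint1 hint2, integral_const_mul, integral_const_mul,
    exp_integral_Ioi r hr, exp_integral_Ioi _ hras]
  field_simp

/-- Error floor of FD relaying: for independent X ~ Exp(lam), Z ~ Exp(1/Om) and
τ(ρ) = c/ρ with c > 0, P( X < τ(ρ)(ρZ+1) ) → lam·c·Om/(1+lam·c·Om) > 0 as ρ → ∞. -/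
theorem stmt17 {Ω : Type*} [MeasurableSpace Ω] (Pr : Measure Ω) [IsProbabilityMeasure Pr]
    (X Z : Ω → ℝ) (hXm : Measurable X) (hZm : Measurable Z)
    (lam Om c : ℝ) (hlam : 0 < lam) (hOm : 0 < Om) (hc : 0 < c)
    (hX : Measure.map X Pr = expMeasure lam)
    (hZ : Measure.map Z Pr = expMeasure (1 / Om))
    (hindep : IndepFun X Z Pr) :
    Tendsto (fun ρ : ℝ => Pr {ω | X ω < (c / ρ) * (ρ * Z ω + 1)})
        atTop (𝓝 (ENNReal.ofReal (lam * c * Om / (1 + lam * c * Om)))) ∧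
    0 < lam * c * Om / (1 + lam * c * Om) := by
  have hr : (0:ℝ) < 1 / Om := by positivity
  set r : ℝ := 1 / Om with hrdef
  refine ⟨?_, by positivity⟩
  have hmap : Pr.map (fun ω => (Z ω, X ω)) = (expMeasure r).prod (expMeasure lam) := by
    rw [← hZ, ← hX]
    exact (indepFun_iff_map_prod_eq_prod_map_map hZm.aemeasurable hXm.aemeasurable).mp hindep.symm
  have hval : ∀ ρ : ℝ, 0 < ρ → Pr {ω | X ω < (c / ρ) * (ρ * Z ω + 1)}
      = ENNReal.ofReal (1 - exp (-(lam * (c / ρ))) * (r / (r + lam * c))) := by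
    intro ρ hρ
    have hS : MeasurableSet {p : ℝ × ℝ | p.2 < c * p.1 + c / ρ} :=
      measurableSet_lt measurable_snd ((measurable_fst.const_mul c).add_const _)
    have hset : {ω | X ω < (c / ρ) * (ρ * Z ω + 1)}
        = (fun ω => (Z ω, X ω)) ⁻¹' {p : ℝ × ℝ | p.2 < c * p.1 + c / ρ} := by
      ext ω
      have : (c / ρ) * (ρ * Z ω + 1) = c * Z ω + c / ρ := by
        field_simp
      simp only [Set.mem_setOf_eq, Set.mem_preimage, this]
    rw [hset, ← Measure.map_apply (hZm.prodMk hXm) hS, hmap,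
      key_prod lam r c (c / ρ) hlam hr hc (by positivity)]
  have hlim0 : Tendsto (fun ρ : ℝ => lam * (c / ρ)) atTop (𝓝 0) := by
    have h1 : Tendsto (fun ρ : ℝ => c / ρ) atTop (𝓝 0) :=
      Tendsto.div_atTop tendsto_const_nhds tendsto_id
    simpa using h1.const_mul lam
  have hcont : Tendsto (fun t : ℝ => ENNReal.ofReal (1 - exp (-t) * (r / (r + lam * c))))
      (𝓝 0) (𝓝 (ENNReal.ofReal (1 - 1 * (r / (r + lam * c))))) := by
    apply (ENNReal.continuous_ofReal.tendsto _).comp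
    have hcts : Continuous (fun t : ℝ => 1 - exp (-t) * (r / (r + lam * c))) := by continuity
    simpa using hcts.tendsto 0
  have hvaleq : 1 - 1 * (r / (r + lam * c)) = lam * c * Om / (1 + lam * c * Om) := by
    have hd1 : (1:ℝ)/Om + lam * c ≠ 0 := by positivity
    have hd2 : (1:ℝ) + lam * c * Om ≠ 0 := by positivity
    rw [hrdef, one_mul]
    field_simp
    ring
  have hfinal := hcont.comp hlim0
  rw [hvaleq] at hfinal
  refine Tendsto.congr' ?_ hfinal
  filter_upwards [eventually_ge_atTop (1:ℝ)] with ρ hρ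
  exact (hval ρ (by linarith)).symm
end
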